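/- Commutator identity for squares under the Schrödinger flow: for a sufficiently regular function $w$ on $\mathbb{T}$ and $s \in \mathbb{R}$, $(e^{is\partial_x^2} w)^2 - e^{is\partial_x^2}(w^2) = -2i\int_0^s e^{i(s-s_1)\partial_x^2}\big(e^{is_1\partial_x^2}\partial_x w\big)^2\, ds_1$. -/

import Mathlib

/-- Japanese bracket. -/
noncomputable def jap (x : ℝ) : ℝ := Real.sqrt (1 + x ^ 2)

/-- A function on `𝕋` is represented by its Fourier coefficients `c : ℤ → ℂ`.
`pc a b` is the Fourier coefficient sequence of the pointwise product. -/
noncomputable def pc (a b : ℤ → ℂ) : ℤ → ℂ := fun k => ∑' j : ℤ, a j * b (k - j)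

/-- Fourier coefficients of the complex conjugate function. -/
noncomputable def cconj (c : ℤ → ℂ) : ℤ → ℂ := fun k => starRingEnd ℂ (c (-k))

/-- Fourier coefficients of `e^{it∂ₓ²} f` (multiplication by `e^{-itk²}`). -/
noncomputable def eS (t : ℝ) (c : ℤ → ℂ) : ℤ → ℂ :=
  fun k => Complex.exp (-(Complex.I) * t * (k : ℝ) ^ 2) * c k

/-- Fourier coefficients of `∂ₓ⁻¹ f = ∑_{k≠0} (ik)⁻¹ f̂ₖ e^{ikx}`. -/
noncomputable def pinv (c : ℤ → ℂ) : ℤ → ℂ :=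
  fun k => if k = 0 then 0 else c k / (Complex.I * k)

/-- Fourier coefficients of `∂ₓ f`. -/
noncomputable def dx (c : ℤ → ℂ) : ℤ → ℂ := fun k => Complex.I * k * c k

/-- Fourier coefficients of `∂ₓ² f`. -/
noncomputable def dx2 (c : ℤ → ℂ) : ℤ → ℂ := fun k => (Complex.I * k) ^ 2 * c k

/-- "Sufficiently regular": Fourier coefficients decay faster than any polynomial. -/
def Regular (c : ℤ → ℂ) : Prop :=
  ∀ j : ℕ, Summable fun k : ℤ => jap k ^ (j : ℝ) * ‖c k‖

/-! Mode by mode, both sides are sums over `j` of `ŵ j * ŵ (k - j)` times a phase. Since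
`k² - j² - (k - j)² = 2j(k - j)`, the left side carries the factor `e^{-isk²}(e^{2isj(k-j)} - 1)`.
On the right the two derivatives contribute `-j(k - j)`, and `2ij(k - j)∫₀ˢ e^{2is₁j(k-j)} ds₁`
is the same factor `e^{2isj(k-j)} - 1`. Absolute summability of `ŵ` and of `∂ₓŵ` makes all series
converge and lets the integral pass through the sum. -/

open Complex

/-- `k² - j² - (k - j)²`, the phase mismatch between the output mode `k` and the input modes
`j`, `k - j`. -/
noncomputable def resonance (k j : ℤ) : ℝ := 2 * j * (k - j)

lemma eS_mul_eS (t : ℝ) (a b : ℤ → ℂ) (k j : ℤ) :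
    eS t a j * eS t b (k - j) =
      exp (-I * t * (k : ℝ) ^ 2) * (exp (I * resonance k j * t) * (a j * b (k - j))) := by
  simp only [eS, resonance]
  rw [← mul_assoc (exp _), ← exp_add, mul_mul_mul_comm, ← exp_add]
  congr 2
  push_cast
  ring

lemma pc_eS (t : ℝ) (a b : ℤ → ℂ) (k : ℤ) :
    pc (eS t a) (eS t b) k =
      exp (-I * t * (k : ℝ) ^ 2) * ∑' j, exp (I * resonance k j * t) * (a j * b (k - j)) := by
  simp only [pc, eS_mul_eS, tsum_mul_left]

lemma dx_eS (t : ℝ) (c : ℤ → ℂ) : dx (eS t c) = eS t (dx c) := by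
  ext k
  simp only [dx, eS]
  ring

lemma summable_norm_mul_sub {a b : ℤ → ℂ} (ha : Summable (‖a ·‖)) (hb : Summable (‖b ·‖))
    (k : ℤ) : Summable fun j => ‖a j * b (k - j)‖ :=
  (ha.mul_norm hb).comp_injective (i := fun j => (j, k - j)) fun _ _ h => (Prod.ext_iff.1 h).1

lemma Regular.summable_norm {c : ℤ → ℂ} (hc : Regular c) : Summable (‖c ·‖) := by
  simpa using hc 0

lemma Regular.summable_norm_dx {c : ℤ → ℂ} (hc : Regular c) : Summable (‖dx c ·‖) := by
  refine (hc 1).of_nonneg_of_le (fun _ => norm_nonneg _) fun k => ?_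
  have habs : |(k : ℝ)| ≤ jap k := by
    rw [jap, ← Real.sqrt_sq_eq_abs]
    exact Real.sqrt_le_sqrt (by linarith)
  simpa [dx] using mul_le_mul_of_nonneg_right habs (norm_nonneg (c k))

lemma norm_exp_I_mul_ofReal_mul (ω t : ℝ) : ‖exp (I * ω * t)‖ = 1 := by
  rw [mul_assoc, ← ofReal_mul, norm_exp_I_mul_ofReal]

lemma summable_exp_I_mul_mul {ι : Type*} {f : ι → ℂ} (hf : Summable (‖f ·‖)) (ω : ι → ℝ)
    (t : ℝ) : Summable fun i => exp (I * ω i * t) * f i :=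
  hf.of_norm_bounded fun i => by rw [norm_mul, norm_exp_I_mul_ofReal_mul, one_mul]

lemma mul_integral_exp_mul_complex (c : ℂ) (a b : ℝ) :
    c * ∫ x in a..b, exp (c * x) = exp (c * b) - exp (c * a) := by
  rcases eq_or_ne c 0 with rfl | hc
  · simp
  · rw [integral_exp_mul_complex hc, mul_div_cancel₀ _ hc]

lemma integral_tsum_exp_I_mul_mul {ι : Type*} [Countable ι] {f : ι → ℂ}
    (hf : Summable (‖f ·‖)) (ω : ι → ℝ) (a b : ℝ) :
    ∫ t in a..b, ∑' i, exp (I * ω i * t) * f i =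
      ∑' i, (∫ t in a..b, exp (I * ω i * t)) * f i := by
  simp_rw [← intervalIntegral.integral_mul_const]
  have hbound (i : ι) : ∀ᵐ t, t ∈ Set.uIoc a b → ‖exp (I * ω i * t) * f i‖ ≤ ‖f i‖ :=
    .of_forall fun t _ => by rw [norm_mul, norm_exp_I_mul_ofReal_mul, one_mul]
  refine (intervalIntegral.hasSum_integral_of_dominated_convergence (fun i _ => ‖f i‖)
    (fun i => by fun_prop) hbound (.of_forall fun _ _ => hf) intervalIntegrable_const
    (.of_forall fun t _ => (summable_exp_I_mul_mul hf ω t).hasSum)).tsum_eq.symm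

lemma pc_eS_sub_exp_mul_pc (s : ℝ) {a b : ℤ → ℂ} (k : ℤ)
    (h : Summable fun j => ‖a j * b (k - j)‖) :
    pc (eS s a) (eS s b) k - exp (-I * s * (k : ℝ) ^ 2) * pc a b k =
      exp (-I * s * (k : ℝ) ^ 2) *
        ∑' j, (exp (I * resonance k j * s) - 1) * (a j * b (k - j)) := by
  rw [pc_eS, pc, ← mul_sub, ← (summable_exp_I_mul_mul h _ s).tsum_sub h.of_norm]
  simp_rw [sub_one_mul]

lemma integral_exp_mul_pc_dx_eS (s : ℝ) {a b : ℤ → ℂ} (k : ℤ)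
    (h : Summable fun j => ‖dx a j * dx b (k - j)‖) :
    -2 * I * ∫ t in (0 : ℝ)..s,
        exp (-I * (s - t) * (k : ℝ) ^ 2) * pc (dx (eS t a)) (dx (eS t b)) k =
      exp (-I * s * (k : ℝ) ^ 2) *
        ∑' j, (exp (I * resonance k j * s) - 1) * (a j * b (k - j)) := by
  have hphase (t : ℝ) :
      exp (-I * (s - t) * (k : ℝ) ^ 2) * exp (-I * t * (k : ℝ) ^ 2) =
        exp (-I * s * (k : ℝ) ^ 2) := by
    rw [← exp_add]; ring_nf
  calc
    _ = -2 * I * ∫ t in (0 : ℝ)..s, exp (-I * s * (k : ℝ) ^ 2) *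
          ∑' j, exp (I * resonance k j * t) * (dx a j * dx b (k - j)) := by
      simp_rw [dx_eS, pc_eS, ← mul_assoc, hphase]
    _ = exp (-I * s * (k : ℝ) ^ 2) * ∑' j,
          (I * resonance k j * ∫ t in (0 : ℝ)..s, exp (I * resonance k j * t)) *
            (a j * b (k - j)) := by
      rw [intervalIntegral.integral_const_mul, integral_tsum_exp_I_mul_mul h, mul_left_comm,
        ← tsum_mul_left]
      congr 1
      refine tsum_congr fun j => ?_
      generalize (∫ t in (0 : ℝ)..s, exp (I * resonance k j * t)) = J
      simp only [dx, resonance]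
      push_cast
      linear_combination (-2 * I * J * j * (k - j) * a j * b (k - j)) * I_sq
    _ = _ := by
      simp_rw [mul_integral_exp_mul_complex, ofReal_zero, mul_zero, exp_zero]

/-- **Commutator identity for squares under the Schrödinger flow:** for sufficiently
regular `w` on `𝕋` and `s ∈ ℝ`, mode by mode,
`(e^{is∂ₓ²}w)² - e^{is∂ₓ²}(w²) = -2i ∫₀^s e^{i(s-s₁)∂ₓ²}(e^{is₁∂ₓ²}∂ₓw)² ds₁`. -/
theorem square_commutator_identity (w : ℤ → ℂ) (hw : Regular w) (s : ℝ) :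
    ∀ k : ℤ,
      pc (eS s w) (eS s w) k -
          Complex.exp (-(Complex.I) * s * (k : ℝ) ^ 2) * pc w w k =
        (-2 * Complex.I) *
          ∫ s1 in (0 : ℝ)..s,
            Complex.exp (-(Complex.I) * (s - s1) * (k : ℝ) ^ 2) *
              pc (dx (eS s1 w)) (dx (eS s1 w)) k := by
  intro k
  rw [pc_eS_sub_exp_mul_pc s k (summable_norm_mul_sub hw.summable_norm hw.summable_norm k),
    integral_exp_mul_pc_dx_eS s k
      (summable_norm_mul_sub hw.summable_norm_dx hw.summable_norm_dx k)]
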